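/- arXiv:2303.02334 — 2 statements merged into one kernel-verified Lean document; each statement's English description precedes it below -/
import Mathlib

section
/- Assume n_i > 0 and O_i ≠ 0 for all i = 1,…,N, assume ⟨V⟩_α ≠ 0, and assume w_i = 0 for all i = 1,…,N. Then the residual vector ε_α = ⟨φ(D)⟩_α − ‖⟨V⟩_α‖ · φ(⟨V⟩_α) satisfies ‖ε_α‖ ≤ Σ_{i=1}^N α_i (π̃_i + √(Q_{i,n_iα})). -/
open Finset
open scoped BigOperators RealInnerProductSpace

/-!
Since `w = 0` we have `D i = O i`, and `‖⟨V⟩_α‖ • φ ⟨V⟩_α = ⟨V⟩_α`, so the residual is the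
`α`-average of `φ (O i) - ⟨V⟩_α`. Each term is split at the rescaled mean `O i / n i`:
`φ (O i) - O i / n i` is `φ (O i)` scaled by `1 - π_i`, and `O i / n i - ⟨V⟩_α` equals
`(1 / n i) • ∑ j, c j • V j` with `c = ω i - n i α` summing to zero. For such coefficients the
Gram expansion `∑ c j c j' ⟪V j, V j'⟫` may be replaced by `-∑ c j c j' (1 - cos θ_{jj'})`, and
`0 ≤ 1 - cos θ ≤ θ² / 2` gives the bound `Q i`.
-/

noncomputable def phi (x : EuclideanSpace ℝ (Fin 3)) : EuclideanSpace ℝ (Fin 3) := ‖x‖⁻¹ • x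

section

variable {E : Type*} [NormedAddCommGroup E] [InnerProductSpace ℝ E] {ι : Type*} [Fintype ι]
  {V : ι → E}

lemma norm_sum_smul_le_sum_of_nonneg (hV : ∀ j, ‖V j‖ = 1) {r : ι → ℝ} (hr : ∀ j, 0 ≤ r j) :
    ‖∑ j, r j • V j‖ ≤ ∑ j, r j :=
  (norm_sum_le _ _).trans_eq <| sum_congr rfl fun j _ => by
    rw [norm_smul, hV, mul_one, Real.norm_of_nonneg (hr j)]

lemma norm_sum_smul_sq_eq_sum_sum (c : ι → ℝ) :
    ‖∑ j, c j • V j‖ ^ 2 = ∑ j, ∑ j', c j * c j' * ⟪V j, V j'⟫ := by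
  rw [← real_inner_self_eq_norm_sq, sum_inner]
  refine sum_congr rfl fun j _ => ?_
  rw [real_inner_smul_left, inner_sum, mul_sum]
  exact sum_congr rfl fun j' _ => by rw [real_inner_smul_right, mul_assoc]

lemma neg_mul_one_sub_cos_le (a θ : ℝ) : -a * (1 - Real.cos θ) ≤ |a| * (θ ^ 2 / 2) :=
  mul_le_mul (neg_le_abs a) (by linarith [Real.one_sub_sq_div_two_le_cos (x := θ)])
    (by linarith [Real.cos_le_one θ]) (abs_nonneg a)

lemma norm_sum_smul_sq_le_of_sum_eq_zero (hV : ∀ j, ‖V j‖ = 1) {c : ι → ℝ} (hc : ∑ j, c j = 0) :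
    ‖∑ j, c j • V j‖ ^ 2 ≤
      ∑ j, ∑ j', |c j| * |c j'| * InnerProductGeometry.angle (V j) (V j') ^ 2 / 2 := by
  have hinner : ∀ j j', ⟪V j, V j'⟫ = Real.cos (InnerProductGeometry.angle (V j) (V j')) := by
    intro j j'
    rw [InnerProductGeometry.cos_angle, hV, hV, mul_one, div_one]
  have hcc : ∑ j, ∑ j', c j * c j' = 0 := by rw [← sum_mul_sum, hc, zero_mul]
  calc ‖∑ j, c j • V j‖ ^ 2
      = ∑ j, ∑ j', -(c j * c j') * (1 - Real.cos (InnerProductGeometry.angle (V j) (V j'))) := by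
        rw [norm_sum_smul_sq_eq_sum_sum, ← sub_zero (∑ j, ∑ j', _), ← hcc, ← sum_sub_distrib]
        refine sum_congr rfl fun j _ => ?_
        rw [← sum_sub_distrib]
        exact sum_congr rfl fun j' _ => by rw [hinner]; ring
    _ ≤ _ := sum_le_sum fun j _ => sum_le_sum fun j' _ => by
        rw [← abs_mul, mul_div_assoc]
        exact neg_mul_one_sub_cos_le _ _

lemma norm_inv_smul_sum_sub_sum_le (hV : ∀ j, ‖V j‖ = 1) {r α : ι → ℝ} {n : ℝ}
    (hn : ∑ j, r j = n) (hn0 : n ≠ 0) (hαsum : ∑ j, α j = 1) :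
    ‖n⁻¹ • ∑ j, r j • V j - ∑ j, α j • V j‖ ≤
      √((1 / n ^ 2) * ∑ j, ∑ j', |r j - n * α j| * |r j' - n * α j'| *
        InnerProductGeometry.angle (V j) (V j') ^ 2 / 2) := by
  have hc : ∑ j, (r j - n * α j) = 0 := by rw [sum_sub_distrib, ← mul_sum, hn, hαsum, mul_one, sub_self]
  have hrepr : n⁻¹ • ∑ j, r j • V j - ∑ j, α j • V j = n⁻¹ • ∑ j, (r j - n * α j) • V j := by
    simp only [sub_smul, sum_sub_distrib, smul_sub, ← smul_smul, ← smul_sum, inv_smul_smul₀ hn0]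
  rw [← abs_norm, hrepr]
  refine Real.abs_le_sqrt ?_
  rw [norm_smul, mul_pow, Real.norm_eq_abs, sq_abs, one_div, inv_pow]
  exact mul_le_mul_of_nonneg_left (norm_sum_smul_sq_le_of_sum_eq_zero hV hc) (by positivity)

lemma norm_sum_smul_sub_le {α : ι → ℝ} (hα : ∀ i, 0 ≤ α i) (hαsum : ∑ i, α i = 1)
    (x : ι → E) (y : E) : ‖∑ i, α i • x i - y‖ ≤ ∑ i, α i * ‖x i - y‖ := by
  have : ∑ i, α i • x i - y = ∑ i, α i • (x i - y) := by
    simp only [smul_sub, sum_sub_distrib, ← sum_smul, hαsum, one_smul]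
  rw [this]
  refine (norm_sum_le _ _).trans_eq (sum_congr rfl fun i _ => ?_)
  rw [norm_smul, Real.norm_of_nonneg (hα i)]

end

lemma norm_smul_phi (x : EuclideanSpace ℝ (Fin 3)) : ‖x‖ • phi x = x := by
  rcases eq_or_ne x 0 with rfl | hx
  · simp [phi]
  · rw [phi, smul_smul, mul_inv_cancel₀ (norm_ne_zero_iff.mpr hx), one_smul]

lemma norm_phi_le_one (x : EuclideanSpace ℝ (Fin 3)) : ‖phi x‖ ≤ 1 := by
  rw [phi, norm_smul, norm_inv, norm_norm]
  exact inv_mul_le_one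

lemma norm_phi_sub_smul_le (x : EuclideanSpace ℝ (Fin 3)) {c : ℝ} (hc : c * ‖x‖ ≤ 1) :
    ‖phi x - c • x‖ ≤ 1 - c * ‖x‖ := by
  have : phi x - c • x = (1 - c * ‖x‖) • phi x := by
    rw [sub_smul, one_smul, ← smul_smul, norm_smul_phi]
  rw [this, norm_smul, Real.norm_of_nonneg (sub_nonneg.mpr hc)]
  exact mul_le_of_le_one_right (sub_nonneg.mpr hc) (norm_phi_le_one x)

theorem static_weight_reduction_error_zero_w_general
    (N : ℕ)
    (V : Fin N → EuclideanSpace ℝ (Fin 3)) (hV : ∀ i, ‖V i‖ = 1)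
    (ω : Fin N → Fin N → ℝ) (hω : ∀ i j, ω i j = 0 ∨ ω i j = 1)
    (α : Fin N → ℝ) (hα : ∀ i, 0 ≤ α i) (hαsum : ∑ i, α i = 1)
    (w : Fin N → EuclideanSpace ℝ (Fin 3))
    (n : Fin N → ℝ) (hn : ∀ i, n i = ∑ j, ω i j)
    (O : Fin N → EuclideanSpace ℝ (Fin 3)) (hO : ∀ i, O i = ∑ j, ω i j • V j)
    (D : Fin N → EuclideanSpace ℝ (Fin 3)) (hD : ∀ i, D i = O i + w i)
    (Vα : EuclideanSpace ℝ (Fin 3)) (hVα : Vα = ∑ i, α i • V i)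
    (Q : Fin N → ℝ)
    (hQ : ∀ i, Q i = (1 / n i ^ 2) *
      ∑ j, ∑ j', |ω i j - n i * α j| * |ω i j' - n i * α j'| *
        InnerProductGeometry.angle (V j) (V j') ^ 2 / 2)
    (hn0 : ∀ i, 0 < n i) (hw0 : ∀ i, w i = 0) :
    ‖(∑ i, α i • phi (D i)) - ‖Vα‖ • phi Vα‖ ≤
      ∑ i, α i * ((1 - ‖O i‖ / n i) + Real.sqrt (Q i)) := by
  have hterm : ∀ i, ‖phi (D i) - Vα‖ ≤ (1 - ‖O i‖ / n i) + √(Q i) := by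
    intro i
    have hωnonneg : ∀ j, 0 ≤ ω i j := fun j => by rcases hω i j with h | h <;> simp [h]
    have hOn : (n i)⁻¹ * ‖O i‖ ≤ 1 := by
      rw [inv_mul_le_one₀ (hn0 i), hO, hn]
      exact norm_sum_smul_le_sum_of_nonneg hV hωnonneg
    have hmean : ‖(n i)⁻¹ • O i - Vα‖ ≤ √(Q i) := by
      rw [hO, hVα, hQ]
      exact norm_inv_smul_sum_sub_sum_le hV (hn i).symm (hn0 i).ne' hαsum
    calc ‖phi (D i) - Vα‖ ≤ ‖phi (O i) - (n i)⁻¹ • O i‖ + ‖(n i)⁻¹ • O i - Vα‖ := by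
          rw [hD, hw0, add_zero]; exact norm_sub_le_norm_sub_add_norm_sub _ _ _
      _ ≤ (1 - ‖O i‖ / n i) + √(Q i) := by
          rw [div_eq_inv_mul]; exact add_le_add (norm_phi_sub_smul_le _ hOn) hmean
  rw [norm_smul_phi]
  exact (norm_sum_smul_sub_le hα hαsum _ _).trans
    (sum_le_sum fun i _ => mul_le_mul_of_nonneg_left (hterm i) (hα i))

/-- Corollary (static-weight reduction error with zero attraction and stimulus). -/
theorem static_weight_reduction_error_zero_w
    (N : ℕ) (hN : 0 < N)
    (V : Fin N → EuclideanSpace ℝ (Fin 3)) (hV : ∀ i, ‖V i‖ = 1)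
    (ω : Fin N → Fin N → ℝ) (hω : ∀ i j, ω i j = 0 ∨ ω i j = 1)
    (α : Fin N → ℝ) (hα : ∀ i, 0 ≤ α i) (hαsum : ∑ i, α i = 1)
    (w : Fin N → EuclideanSpace ℝ (Fin 3))
    (n : Fin N → ℝ) (hn : ∀ i, n i = ∑ j, ω i j)
    (O : Fin N → EuclideanSpace ℝ (Fin 3)) (hO : ∀ i, O i = ∑ j, ω i j • V j)
    (D : Fin N → EuclideanSpace ℝ (Fin 3)) (hD : ∀ i, D i = O i + w i)
    (Vα : EuclideanSpace ℝ (Fin 3)) (hVα : Vα = ∑ i, α i • V i)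
    (Q : Fin N → ℝ)
    (hQ : ∀ i, Q i = (1 / n i ^ 2) *
      ∑ j, ∑ j', |ω i j - n i * α j| * |ω i j' - n i * α j'| *
        InnerProductGeometry.angle (V j) (V j') ^ 2 / 2)
    (hn0 : ∀ i, 0 < n i) (hO0 : ∀ i, O i ≠ 0)
    (hVα0 : Vα ≠ 0) (hw0 : ∀ i, w i = 0) :
    ‖(∑ i, α i • phi (D i)) - ‖Vα‖ • phi Vα‖ ≤
      ∑ i, α i * ((1 - ‖O i‖ / n i) + Real.sqrt (Q i)) :=
  static_weight_reduction_error_zero_w_general N V hV ω hω α hα hαsum w n hn O hO D hD Vα hVα Q hQ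
    hn0 hw0
end

section
/- For every i ∈ {1,…,N} with n_i > 0 and O_i ≠ 0, one has ‖φ(O_i) − ⟨V⟩_α‖ ≤ π̃_i + √(Q_{i,n_iα}). -/
open Finset
open scoped BigOperators RealInnerProductSpace

namespace InnerProductGeometry

variable {F : Type*} [NormedAddCommGroup F] [InnerProductSpace ℝ F]

theorem norm_sub_le_angle {x y : F} (hx : ‖x‖ = 1) (hy : ‖y‖ = 1) : ‖x - y‖ ≤ angle x y := by
  refine (pow_le_pow_iff_left₀ (norm_nonneg _) (angle_nonneg x y) two_ne_zero).mp ?_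
  rw [sq, norm_sub_sq_eq_norm_sq_add_norm_sq_sub_two_mul_norm_mul_norm_mul_cos_angle, hx, hy]
  linarith [Real.one_sub_sq_div_two_le_cos (x := angle x y)]

theorem norm_sq_sum_smul_le_of_sum_eq_zero {ι : Type*} (s : Finset ι) {c : ι → ℝ} {v : ι → F}
    (hv : ∀ i ∈ s, ‖v i‖ = 1) (hc : ∑ i ∈ s, c i = 0) :
    ‖∑ i ∈ s, c i • v i‖ ^ 2 ≤
      ∑ i ∈ s, ∑ j ∈ s, |c i| * |c j| * angle (v i) (v j) ^ 2 / 2 := by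
  rw [← real_inner_self_eq_norm_sq, inner_sum_smul_sum_smul_of_sum_eq_zero _ hc _ hc,
    ← sum_neg_distrib, sum_div]
  refine sum_le_sum fun i hi => ?_
  rw [← sum_neg_distrib, sum_div]
  refine sum_le_sum fun j hj => ?_
  rw [← sq, ← abs_mul, ← neg_mul]
  gcongr
  · exact neg_le_abs _
  · exact norm_sub_le_angle (hv i hi) (hv j hj)

end InnerProductGeometry

theorem norm_inv_norm_smul_sub_inv_smul_le {E : Type*} [NormedAddCommGroup E] [NormedSpace ℝ E]
    {x : E} {r : ℝ} (hxr : ‖x‖ ≤ r) :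
    ‖‖x‖⁻¹ • x - r⁻¹ • x‖ ≤ 1 - ‖x‖ / r := by
  rcases eq_or_ne x 0 with rfl | hx
  · simp
  have hx' : 0 < ‖x‖ := norm_pos_iff.mpr hx
  rw [← sub_smul, norm_smul, Real.norm_of_nonneg (sub_nonneg.mpr (inv_anti₀ hx' hxr))]
  rw [sub_mul, inv_mul_cancel₀ hx'.ne', inv_mul_eq_div]

theorem zeta2_norm_le_general
    (N : ℕ)
    (V : Fin N → EuclideanSpace ℝ (Fin 3)) (hV : ∀ i, ‖V i‖ = 1)
    (ω : Fin N → Fin N → ℝ) (hω : ∀ i j, ω i j = 0 ∨ ω i j = 1)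
    (α : Fin N → ℝ) (hαsum : ∑ i, α i = 1)
    (n : Fin N → ℝ) (hn : ∀ i, n i = ∑ j, ω i j)
    (O : Fin N → EuclideanSpace ℝ (Fin 3)) (hO : ∀ i, O i = ∑ j, ω i j • V j)
    (Vα : EuclideanSpace ℝ (Fin 3)) (hVα : Vα = ∑ i, α i • V i)
    (Q : Fin N → ℝ)
    (hQ : ∀ i, Q i = (1 / n i ^ 2) *
      ∑ j, ∑ j', |ω i j - n i * α j| * |ω i j' - n i * α j'| *
        InnerProductGeometry.angle (V j) (V j') ^ 2 / 2)
    (i : Fin N) (hn0 : 0 < n i) :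
    ‖phi (O i) - Vα‖ ≤ (1 - ‖O i‖ / n i) + Real.sqrt (Q i) := by
  have hOn : ‖O i‖ ≤ n i := by
    rw [hO, hn]
    refine norm_sum_le_of_le _ fun j _ => ?_
    rw [norm_smul, hV, mul_one]
    rcases hω i j with h | h <;> simp [h]
  set c : Fin N → ℝ := fun j => ω i j - n i * α j
  have hc : ∑ j, c j = 0 := by
    simp only [c, sum_sub_distrib, ← mul_sum, hαsum, ← hn, mul_one, sub_self]
  have hdecomp : (n i)⁻¹ • O i - Vα = (n i)⁻¹ • ∑ j, c j • V j := by
    rw [hO, hVα, smul_sum, smul_sum, ← sum_sub_distrib]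
    refine sum_congr rfl fun j _ => ?_
    simp only [c, smul_smul, ← sub_smul, mul_sub, inv_mul_cancel_left₀ hn0.ne']
  have hmean : ‖(n i)⁻¹ • O i - Vα‖ ≤ √(Q i) := by
    refine Real.le_sqrt_of_sq_le ?_
    rw [hdecomp, norm_smul, mul_pow, hQ, norm_inv, Real.norm_of_nonneg hn0.le, inv_pow, ← one_div]
    gcongr
    exact InnerProductGeometry.norm_sq_sum_smul_le_of_sum_eq_zero _ (fun j _ => hV j) hc
  calc ‖phi (O i) - Vα‖ ≤ ‖phi (O i) - (n i)⁻¹ • O i‖ + ‖(n i)⁻¹ • O i - Vα‖ :=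
        norm_sub_le_norm_sub_add_norm_sub _ _ _
    _ ≤ (1 - ‖O i‖ / n i) + √(Q i) :=
        add_le_add (norm_inv_norm_smul_sub_inv_smul_le hOn) hmean

/-- Bound on `ζ_{i,2}` in the proof of Proposition A.3:
`‖φ(O_i) − ⟨V⟩_α‖ ≤ π̃_i + √(Q_{i, n_i α})`. -/
theorem zeta2_norm_le
    (N : ℕ) (hN : 0 < N)
    (V : Fin N → EuclideanSpace ℝ (Fin 3)) (hV : ∀ i, ‖V i‖ = 1)
    (ω : Fin N → Fin N → ℝ) (hω : ∀ i j, ω i j = 0 ∨ ω i j = 1)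
    (α : Fin N → ℝ) (hα : ∀ i, 0 ≤ α i) (hαsum : ∑ i, α i = 1)
    (n : Fin N → ℝ) (hn : ∀ i, n i = ∑ j, ω i j)
    (O : Fin N → EuclideanSpace ℝ (Fin 3)) (hO : ∀ i, O i = ∑ j, ω i j • V j)
    (Vα : EuclideanSpace ℝ (Fin 3)) (hVα : Vα = ∑ i, α i • V i)
    (Q : Fin N → ℝ)
    (hQ : ∀ i, Q i = (1 / n i ^ 2) *
      ∑ j, ∑ j', |ω i j - n i * α j| * |ω i j' - n i * α j'| *
        InnerProductGeometry.angle (V j) (V j') ^ 2 / 2)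
    (i : Fin N) (hn0 : 0 < n i) (hO0 : O i ≠ 0) :
    ‖phi (O i) - Vα‖ ≤ (1 - ‖O i‖ / n i) + Real.sqrt (Q i) :=
  zeta2_norm_le_general N V hV ω hω α hαsum n hn O hO Vα hVα Q hQ i hn0
end
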